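/- arXiv:2602.16280 — 9 statements merged into one kernel-verified Lean document; each statement's English description precedes it below -/
import Mathlib

section
/- Let A, B, W be finite-dimensional real vector spaces, let β : A →ₗ B →ₗ W be a bilinear map, and let γ : A* →ₗ B* →ₗ W* be a bilinear map into the dual of W satisfying the compatibility condition γ e f (β a b) = e a * f b for all a ∈ A, b ∈ B, e ∈ A*, f ∈ B*. Then the induced linear map TensorProduct.lift β : A ⊗[ℝ] B → W is injective; consequently, there exists a subspace C of W such that the range of TensorProduct.lift β and C are complementary subspaces of W (W is their internal direct sum). -/
/-!
The compatibility condition says that for all effects `e`, `f` the functional `γ e f` restricts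
along `A ⊗ B → W` to the product functional `e ⊗ f`. Product functionals separate the points of
`A ⊗ B` (the coordinate functionals of a product basis are among them), so the kernel of
`A ⊗ B → W` is trivial.
-/

open TensorProduct Module

namespace TensorProduct

variable {R M N : Type*} [CommRing R] [AddCommGroup M] [Module R M] [AddCommGroup N] [Module R N]

theorem _root_.Module.Basis.coord_tensorProduct {ι κ : Type*} (b : Basis ι R M)
    (c : Basis κ R N) (i : ι) (j : κ) :
    (b.tensorProduct c).coord (i, j) = dualDistrib R M N (b.coord i ⊗ₜ c.coord j) :=
  TensorProduct.ext' fun m n ↦ by simp [Basis.tensorProduct_repr_tmul_apply, mul_comm]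

theorem eq_zero_of_forall_dualDistrib_tmul_apply_eq_zero [Free R M] [Free R N] {x : M ⊗[R] N}
    (hx : ∀ (e : Dual R M) (f : Dual R N), dualDistrib R M N (e ⊗ₜ f) x = 0) : x = 0 := by
  let b := (Free.chooseBasis R M).tensorProduct (Free.chooseBasis R N)
  refine b.ext_elem fun ij ↦ ?_
  rw [map_zero, Finsupp.zero_apply, ← b.coord_apply, Basis.coord_tensorProduct]
  exact hx _ _

theorem dualDistrib_tmul_eq_comp_lift {W : Type*} [AddCommGroup W] [Module R W]
    (β : M →ₗ[R] N →ₗ[R] W) {e : Dual R M} {f : Dual R N} {φ : Dual R W}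
    (hφ : ∀ m n, φ (β m n) = e m * f n) : dualDistrib R M N (e ⊗ₜ f) = φ ∘ₗ lift β :=
  TensorProduct.ext' fun m n ↦ by simp [hφ]

theorem lift_injective_of_forall_exists_dual {W : Type*} [AddCommGroup W] [Module R W] [Free R M]
    [Free R N] (β : M →ₗ[R] N →ₗ[R] W)
    (hβ : ∀ (e : Dual R M) (f : Dual R N), ∃ φ : Dual R W, ∀ m n, φ (β m n) = e m * f n) :
    Function.Injective (lift β) := by
  refine (injective_iff_map_eq_zero _).mpr fun x hx ↦
    eq_zero_of_forall_dualDistrib_tmul_apply_eq_zero fun e f ↦ ?_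
  obtain ⟨φ, hφ⟩ := hβ e f
  rw [dualDistrib_tmul_eq_comp_lift β hφ, LinearMap.comp_apply, hx, map_zero]

end TensorProduct

theorem stmt0_general
    (A B W : Type*)
    [AddCommGroup A] [Module ℝ A]
    [AddCommGroup B] [Module ℝ B]
    [AddCommGroup W] [Module ℝ W]
    (β : A →ₗ[ℝ] B →ₗ[ℝ] W)
    (γ : Module.Dual ℝ A →ₗ[ℝ] Module.Dual ℝ B →ₗ[ℝ] Module.Dual ℝ W)
    (compat : ∀ (a : A) (b : B) (e : Module.Dual ℝ A) (f : Module.Dual ℝ B),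
      γ e f (β a b) = e a * f b) :
    Function.Injective (TensorProduct.lift β) ∧
      ∃ C : Submodule ℝ W, IsCompl (LinearMap.range (TensorProduct.lift β)) C :=
  ⟨lift_injective_of_forall_exists_dual β fun e f ↦ ⟨γ e f, fun a b ↦ compat a b e f⟩,
    Submodule.exists_isCompl _⟩

/-- **Lemma 1 of the paper (AB contains A ⊗ B).**
If `β : A →ₗ B →ₗ W` is the product-state map and `γ : A* →ₗ B* →ₗ W*` the
product-effect map of a composite GPT system, satisfying the compatibility
`γ e f (β a b) = e a * f b`, then the induced map `A ⊗[ℝ] B → W` is injective,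
and hence its range has a complementary subspace `C` in `W`. -/
theorem stmt0
    (A B W : Type*)
    [AddCommGroup A] [Module ℝ A] [FiniteDimensional ℝ A]
    [AddCommGroup B] [Module ℝ B] [FiniteDimensional ℝ B]
    [AddCommGroup W] [Module ℝ W] [FiniteDimensional ℝ W]
    (β : A →ₗ[ℝ] B →ₗ[ℝ] W)
    (γ : Module.Dual ℝ A →ₗ[ℝ] Module.Dual ℝ B →ₗ[ℝ] Module.Dual ℝ W)
    (compat : ∀ (a : A) (b : B) (e : Module.Dual ℝ A) (f : Module.Dual ℝ B),
      γ e f (β a b) = e a * f b) :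
    Function.Injective (TensorProduct.lift β) ∧
      ∃ C : Submodule ℝ W, IsCompl (LinearMap.range (TensorProduct.lift β)) C :=
  stmt0_general A B W β γ compat
end

section
/- Let A, B, W be finite-dimensional real vector spaces, β : A →ₗ B →ₗ W and γ : A* →ₗ B* →ₗ W* bilinear maps satisfying γ e f (β a b) = e a * f b for all a, b, e, f. Define the holistic-effect subspace H_E := {φ ∈ W* | φ (β a b) = 0 for all a ∈ A, b ∈ B}. Then the induced map TensorProduct.lift γ : A* ⊗[ℝ] B* → W* is injective, and its range and H_E are complementary subspaces of W*: IsCompl (range (TensorProduct.lift γ)) H_E. -/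
/-!
Restricting a functional on `W` to product vectors is the dual map `K` of `lift β : A ⊗ B → W`,
and `H_E` is its kernel. By the compatibility condition, `K ∘ lift γ` is the canonical
isomorphism `A* ⊗ B* ≃ (A ⊗ B)*`, so `lift γ` is a section of `K` up to that isomorphism:
it is injective and its range complements `ker K`.
-/

open TensorProduct

namespace LinearMap

variable {R : Type*}

theorem isCompl_range_ker_of_bijective_comp [Semiring R] {M N P : Type*}
    [AddCommMonoid M] [Module R M] [AddCommGroup N] [Module R N] [AddCommGroup P] [Module R P]
    {L : M →ₗ[R] N} {K : N →ₗ[R] P} (h : Function.Bijective (K ∘ L)) :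
    IsCompl (range L) (ker K) := by
  constructor
  · rw [Submodule.disjoint_def]
    rintro _ ⟨t, rfl⟩ hKt
    rw [h.injective (a₁ := t) (a₂ := 0) (by simpa using hKt), map_zero]
  · rw [codisjoint_iff, eq_top_iff]
    rintro φ -
    obtain ⟨t, ht⟩ := h.surjective (K φ)
    refine Submodule.mem_sup.2 ⟨L t, mem_range_self L t, φ - L t, ?_, add_sub_cancel _ _⟩
    rw [mem_ker, map_sub, ← Function.comp_apply (f := K), ht, sub_self]

variable [CommRing R] {M N P : Type*}
    [AddCommMonoid M] [Module R M] [AddCommMonoid N] [Module R N] [AddCommMonoid P] [Module R P]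

theorem iInf_ker_eval_eq_ker_dualMap_lift (β : M →ₗ[R] N →ₗ[R] P) :
    ⨅ (m : M) (n : N), ker (Module.Dual.eval R P (β m n)) = ker (lift β).dualMap := by
  ext φ
  simp only [Submodule.mem_iInf, mem_ker, Module.Dual.eval_apply]
  constructor
  · intro h
    ext m n
    simp [h]
  · intro h m n
    simpa using LinearMap.congr_fun h (m ⊗ₜ n)

theorem dualMap_lift_comp_lift_eq_dualDistrib (β : M →ₗ[R] N →ₗ[R] P)
    (γ : Module.Dual R M →ₗ[R] Module.Dual R N →ₗ[R] Module.Dual R P)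
    (compat : ∀ (m : M) (n : N) (e : Module.Dual R M) (f : Module.Dual R N),
      γ e f (β m n) = e m * f n) :
    (lift β).dualMap ∘ₗ lift γ = dualDistrib R M N := by
  ext e f m n
  simp [compat]

end LinearMap

open LinearMap in
theorem stmt2_general
    (A B W : Type*)
    [AddCommGroup A] [Module ℝ A] [FiniteDimensional ℝ A]
    [AddCommGroup B] [Module ℝ B] [FiniteDimensional ℝ B]
    [AddCommGroup W] [Module ℝ W]
    (β : A →ₗ[ℝ] B →ₗ[ℝ] W)
    (γ : Module.Dual ℝ A →ₗ[ℝ] Module.Dual ℝ B →ₗ[ℝ] Module.Dual ℝ W)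
    (compat : ∀ (a : A) (b : B) (e : Module.Dual ℝ A) (f : Module.Dual ℝ B),
      γ e f (β a b) = e a * f b) :
    Function.Injective (TensorProduct.lift γ) ∧
      IsCompl (LinearMap.range (TensorProduct.lift γ))
        (⨅ (a : A) (b : B), LinearMap.ker (Module.Dual.eval ℝ W (β a b))) := by
  have hbij : Function.Bijective ((lift β).dualMap ∘ lift γ) := by
    rw [← coe_comp, dualMap_lift_comp_lift_eq_dualDistrib β γ compat]
    exact (dualDistribEquiv ℝ A B).bijective
  refine ⟨hbij.injective.of_comp, ?_⟩
  rw [iInf_ker_eval_eq_ker_dualMap_lift]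
  exact isCompl_range_ker_of_bijective_comp hbij

/-- **Lemma 2 of the paper (effects): (AB)* = (AB)*_⊗ ⊕ H_E.**
The induced map `A* ⊗[ℝ] B* → W*` is injective, and its range together with the
holistic-effect subspace `H_E = {φ : W* | φ (β a b) = 0 for all a, b}` are
complementary subspaces of the dual space `W*`. -/
theorem stmt2
    (A B W : Type*)
    [AddCommGroup A] [Module ℝ A] [FiniteDimensional ℝ A]
    [AddCommGroup B] [Module ℝ B] [FiniteDimensional ℝ B]
    [AddCommGroup W] [Module ℝ W] [FiniteDimensional ℝ W]
    (β : A →ₗ[ℝ] B →ₗ[ℝ] W)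
    (γ : Module.Dual ℝ A →ₗ[ℝ] Module.Dual ℝ B →ₗ[ℝ] Module.Dual ℝ W)
    (compat : ∀ (a : A) (b : B) (e : Module.Dual ℝ A) (f : Module.Dual ℝ B),
      γ e f (β a b) = e a * f b) :
    Function.Injective (TensorProduct.lift γ) ∧
      IsCompl (LinearMap.range (TensorProduct.lift γ))
        (⨅ (a : A) (b : B), LinearMap.ker (Module.Dual.eval ℝ W (β a b))) :=
  stmt2_general A B W β γ compat
end

section
/- Let y be the real 2×2 matrix with rows (0, −1) and (1, 0), and let Y₄ := −(y ⊗ₖ y). A real symmetric 4×4 matrix M (indexed by Fin 2 × Fin 2) satisfies trace(M * (E ⊗ₖ F)) = 0 for all real symmetric 2×2 matrices E and F if and only if M = c • Y₄ for some real number c. In particular, the holistic-state subspace of a pair of rebits is the one-dimensional span of σ_y ⊗ σ_y. -/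
/-!
Pairing `M` with the symmetric product `(eᵢⱼ + eⱼᵢ) ⊗ (eₖₗ + eₗₖ)` and using `Mᵀ = M` gives
`M₍ᵢₖ₎₍ⱼₗ₎ = -M₍ᵢₗ₎₍ⱼₖ₎`; together with the symmetry of `M` this makes the tensor
`(i, j, k, l) ↦ M₍ᵢₖ₎₍ⱼₗ₎` antisymmetric in `(i, j)` and in `(k, l)`. Over `Fin 2` the
antisymmetric matrices form the line spanned by `y`, so `M` is a multiple of `y ⊗ y`.
Conversely `tr (Y₄ (E ⊗ F)) = -tr (y E) · tr (y F)`, and `tr (y E) = 0` because `y` is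
antisymmetric and `E` symmetric.
-/

open Matrix Kronecker

/-- The real 2×2 matrix representing (−i·σ_y), with rows (0, −1) and (1, 0). -/
noncomputable def y : Matrix (Fin 2) (Fin 2) ℝ := !![0, -1; 1, 0]

/-- The real 4×4 matrix representing σ_y ⊗ σ_y. -/
noncomputable def Y₄ : Matrix (Fin 2 × Fin 2) (Fin 2 × Fin 2) ℝ := -(y ⊗ₖ y)

namespace Matrix

variable {R : Type*} [CommRing R] {m n : Type*}

theorem isSymm_single_add_single [DecidableEq n] (i j : n) :
    (single i j (1 : R) + single j i 1).IsSymm := by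
  simp only [IsSymm, transpose_add, transpose_single, add_comm]

variable [IsAddTorsionFree R]

theorem trace_mul_eq_zero_of_transpose_eq_neg [Fintype n] {A E : Matrix n n R}
    (hA : Aᵀ = -A) (hE : E.IsSymm) : (A * E).trace = 0 := by
  refine self_eq_neg.mp ?_
  calc (A * E).trace = (A * E)ᵀ.trace := (trace_transpose _).symm
    _ = -(A * E).trace := by rw [transpose_mul, hE.eq, hA, mul_neg, trace_neg, trace_mul_comm]

theorem apply_eq_neg_of_trace_mul_kronecker_eq_zero [Fintype m] [Fintype n] [DecidableEq m]
    [DecidableEq n] {M : Matrix (m × n) (m × n) R} (hM : M.IsSymm)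
    (h : ∀ E F, E.IsSymm → F.IsSymm → (M * (E ⊗ₖ F)).trace = 0) (i j : m) (k l : n) :
    M (i, k) (j, l) = -M (i, l) (j, k) := by
  have key := h _ _ (isSymm_single_add_single (R := R) i j) (isSymm_single_add_single k l)
  simp only [add_kronecker, kronecker_add, single_kronecker_single, mul_add, trace_add,
    trace_mul_single, mul_one, MulOpposite.op_one, one_smul] at key
  rw [hM.apply (i, k) (j, l), hM.apply (i, l) (j, k)] at key
  have hsum : M (i, k) (j, l) + M (i, l) (j, k) = -(M (i, k) (j, l) + M (i, l) (j, k)) := by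
    linear_combination key
  exact eq_neg_of_add_eq_zero_left (self_eq_neg.mp hsum)

end Matrix

theorem y_transpose : yᵀ = -y := by
  ext i j; fin_cases i <;> fin_cases j <;> simp [y]

theorem eq_smul_y_of_transpose_eq_neg {A : Matrix (Fin 2) (Fin 2) ℝ} (hA : Aᵀ = -A) :
    A = A 1 0 • y := by
  have hA' : ∀ i j, A j i = -A i j := fun i j => congrFun (congrFun hA i) j
  ext i j
  fin_cases i <;> fin_cases j <;> simp [y, hA' 0 1] <;> linarith [hA' 0 0, hA' 1 1]

theorem trace_Y₄_mul_kronecker {E F : Matrix (Fin 2) (Fin 2) ℝ} (hE : E.IsSymm) :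
    (Y₄ * (E ⊗ₖ F)).trace = 0 := by
  rw [Y₄, neg_mul, ← mul_kronecker_mul, trace_neg, trace_kronecker,
    trace_mul_eq_zero_of_transpose_eq_neg y_transpose hE, zero_mul, neg_zero]

theorem eq_smul_y_kronecker_y {M : Matrix (Fin 2 × Fin 2) (Fin 2 × Fin 2) ℝ}
    (hleft : ∀ i j k l, M (j, k) (i, l) = -M (i, k) (j, l))
    (hright : ∀ i j k l, M (i, k) (j, l) = -M (i, l) (j, k)) :
    M = M (1, 1) (0, 0) • (y ⊗ₖ y) := by
  have hslice : ∀ i j k l, M (i, k) (j, l) = M (1, k) (0, l) * y i j := fun i j k l =>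
    congrFun₂ (eq_smul_y_of_transpose_eq_neg (A := of fun i j => M (i, k) (j, l))
      (by ext a b; exact hleft a b k l)) i j
  have hcorner : ∀ k l, M (1, k) (0, l) = M (1, 1) (0, 0) * y k l := fun k l =>
    congrFun₂ (eq_smul_y_of_transpose_eq_neg (A := of fun k l => M (1, k) (0, l))
      (by ext a b; exact hright 1 0 b a)) k l
  ext ⟨i, k⟩ ⟨j, l⟩
  rw [hslice, hcorner, Matrix.smul_apply, kroneckerMap_apply, smul_eq_mul]
  ring

/-- **Holistic-state subspace of two rebits (Eq. (42) of the paper).**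
A real symmetric 4×4 matrix is annihilated by all product effects
`E ⊗ₖ F` (with `E`, `F` real symmetric 2×2 matrices) if and only if it is a
real multiple of `σ_y ⊗ σ_y`. -/
theorem stmt5 (M : Matrix (Fin 2 × Fin 2) (Fin 2 × Fin 2) ℝ) (hM : M.IsSymm) :
    (∀ E F : Matrix (Fin 2) (Fin 2) ℝ, E.IsSymm → F.IsSymm →
      (M * (E ⊗ₖ F)).trace = 0) ↔ ∃ c : ℝ, M = c • Y₄ := by
  constructor
  · intro h
    have hright := apply_eq_neg_of_trace_mul_kronecker_eq_zero hM h
    have hleft : ∀ i j k l, M (j, k) (i, l) = -M (i, k) (j, l) := fun i j k l => by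
      rw [hright i j k l, neg_neg, hM.apply]
    refine ⟨-M (1, 1) (0, 0), ?_⟩
    rw [Y₄, smul_neg, neg_smul, neg_neg]
    exact eq_smul_y_kronecker_y hleft hright
  · rintro ⟨c, rfl⟩ E F hE -
    rw [smul_mul, trace_smul, trace_Y₄_mul_kronecker hE, smul_zero]
end

section
/- Let ρ be a two-rebit state, i.e., a real symmetric positive semidefinite 4×4 matrix of trace 1. Then ρ is real-separable if and only if trace(ρ * Y₄) = 0, where Y₄ := −(y ⊗ₖ y) with y the real 2×2 matrix with rows (0, −1) and (1, 0). Equivalently: a two-rebit state is nonseparable if and only if it has tomographically-nonlocal entanglement (a nonzero σ_y ⊗ σ_y component). -/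
/-!
Write `q(v) = tr(v vᵀ (y ⊗ y)) = 2 (v₀₀ v₁₁ - v₀₁ v₁₀)`; `q(v) = 0` says exactly that `v`, read as a
`2 × 2` matrix, has rank at most one, i.e. `v = a ⊗ b`, and then `v vᵀ = a aᵀ ⊗ b bᵀ` is a multiple
of a product state. Since `tr(A y) = 0` for symmetric `A`, separable states have
`tr(ρ (y ⊗ y)) = 0`. Conversely, write `ρ = ∑ wᵢ wᵢᵀ`, so that `∑ q(wᵢ) = tr(ρ (y ⊗ y)) = 0`.
A rotation `(u, z) ↦ (cos θ u + sin θ z, -sin θ u + cos θ z)` preserves `u uᵀ + z zᵀ`, and when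
`q(u) > 0 > q(z)` the intermediate value theorem yields a `θ` making the first vector isotropic.
Splitting off isotropic vectors one at a time rewrites `ρ` as a sum of `v vᵀ` with `q(v) = 0`.
-/

open Matrix Kronecker

/-- A two-rebit state: a real symmetric positive semidefinite 4×4 matrix of trace 1. -/
def IsTwoRebitState (ρ : Matrix (Fin 2 × Fin 2) (Fin 2 × Fin 2) ℝ) : Prop :=
  ρ.IsSymm ∧ ρ.PosSemidef ∧ ρ.trace = 1

/-- Real separability: a convex combination of Kronecker products of real
symmetric positive semidefinite trace-one 2×2 matrices. -/
def RealSeparable (ρ : Matrix (Fin 2 × Fin 2) (Fin 2 × Fin 2) ℝ) : Prop :=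
  ∃ (n : ℕ) (p : Fin n → ℝ) (A B : Fin n → Matrix (Fin 2) (Fin 2) ℝ),
    (∀ k, 0 ≤ p k) ∧ ((∑ k, p k) = 1) ∧
    (∀ k, (A k).IsSymm ∧ (A k).PosSemidef ∧ (A k).trace = 1) ∧
    (∀ k, (B k).IsSymm ∧ (B k).PosSemidef ∧ (B k).trace = 1) ∧
    ρ = ∑ k, p k • (A k ⊗ₖ B k)

theorem Multiset.exists_pos_of_sum_map_eq_zero {α : Type*} {s : Multiset α} {f : α → ℝ}
    (h : (s.map f).sum = 0) (hne : ∃ x ∈ s, f x ≠ 0) : ∃ x ∈ s, 0 < f x := by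
  by_contra! hle
  obtain ⟨x, hx, hfx⟩ := hne
  have := Multiset.sum_lt_sum (g := 0) hle ⟨x, hx, (hle x hx).lt_of_ne hfx⟩
  simp_all

theorem Multiset.exists_neg_of_sum_map_eq_zero {α : Type*} {s : Multiset α} {f : α → ℝ}
    (h : (s.map f).sum = 0) (hne : ∃ x ∈ s, f x ≠ 0) : ∃ x ∈ s, f x < 0 := by
  simpa using exists_pos_of_sum_map_eq_zero (f := -f) (by simp [Multiset.sum_map_neg, h])
    (by simpa using hne)

theorem exists_mul_eq_of_mul_eq_mul {K : Type*} [Field K] {a b c d : K} (h : a * d = b * c) :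
    ∃ p q r s : K, a = p * r ∧ b = p * s ∧ c = q * r ∧ d = q * s := by
  by_cases ha : a = 0
  · by_cases hb : b = 0
    · exact ⟨0, 1, c, d, by simp [ha, hb]⟩
    · have hc : c = 0 := by simpa [ha, hb] using h.symm
      exact ⟨b, d, 0, 1, by simp [ha, hc]⟩
  · refine ⟨a, c, 1, b / a, by simp, by field_simp, by simp, ?_⟩
    field_simp
    linear_combination h

theorem exists_eq_mul_of_mul_eq_mul {K : Type*} [Field K] (v : Fin 2 × Fin 2 → K)
    (h : v (0, 0) * v (1, 1) = v (0, 1) * v (1, 0)) :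
    ∃ a b : Fin 2 → K, v = fun p => a p.1 * b p.2 := by
  obtain ⟨p, q, r, s, h₀₀, h₀₁, h₁₀, h₁₁⟩ := exists_mul_eq_of_mul_eq_mul h
  refine ⟨![p, q], ![r, s], funext ?_⟩
  rintro ⟨i, j⟩
  fin_cases i <;> fin_cases j <;> simp [*]

namespace Matrix

theorem vecMulVec_mul_mul {l m R : Type*} [CommSemigroup R] (a c : l → R) (b d : m → R) :
    vecMulVec (fun p : l × m => a p.1 * b p.2) (fun p => c p.1 * d p.2) =
      vecMulVec a c ⊗ₖ vecMulVec b d := by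
  ext ⟨i, j⟩ ⟨k, l⟩
  simp only [vecMulVec_apply, kroneckerMap_apply]
  ac_rfl

section Real

open Real

variable {n : Type*} [Fintype n]

theorem PosSemidef.exists_eq_trace_smul [DecidableEq n] [Nonempty n] {A : Matrix n n ℝ}
    (hA : A.PosSemidef) :
    ∃ S : Matrix n n ℝ, (S.IsSymm ∧ S.PosSemidef ∧ S.trace = 1) ∧ A = A.trace • S := by
  suffices ∃ S : Matrix n n ℝ, (S.PosSemidef ∧ S.trace = 1) ∧ A = A.trace • S by
    obtain ⟨S, ⟨hS, hS1⟩, hAS⟩ := this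
    exact ⟨S, ⟨isHermitian_iff_isSymm.mp hS.isHermitian, hS, hS1⟩, hAS⟩
  by_cases htr : A.trace = 0
  · obtain ⟨i⟩ := ‹Nonempty n›
    refine ⟨vecMulVec (Pi.single i 1) (Pi.single i 1), ⟨?_, by simp [trace_vecMulVec]⟩, ?_⟩
    · simpa using posSemidef_vecMulVec_self_star (Pi.single i (1 : ℝ))
    · rw [htr, zero_smul, ← hA.trace_eq_zero_iff, htr]
  · refine ⟨A.trace⁻¹ • A, ⟨hA.smul (inv_nonneg.mpr hA.trace_nonneg), ?_⟩, ?_⟩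
    · rw [trace_smul, smul_eq_mul, inv_mul_cancel₀ htr]
    · rw [smul_smul, mul_inv_cancel₀ htr, one_smul]

omit [Fintype n] in
theorem vecMulVec_rotate_add (u z : n → ℝ) (θ : ℝ) :
    vecMulVec (cos θ • u + sin θ • z) (cos θ • u + sin θ • z) +
        vecMulVec (-sin θ • u + cos θ • z) (-sin θ • u + cos θ • z) =
      vecMulVec u u + vecMulVec z z := by
  ext i j
  simp only [add_apply, vecMulVec_apply, Pi.add_apply, Pi.smul_apply, smul_eq_mul]
  linear_combination (u i * u j + z i * z j) * cos_sq_add_sin_sq θ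

theorem exists_trace_vecMulVec_rotate_mul_eq_zero (M : Matrix n n ℝ) {u z : n → ℝ}
    (hu : 0 ≤ (vecMulVec u u * M).trace) (hz : (vecMulVec z z * M).trace ≤ 0) :
    ∃ θ : ℝ, (vecMulVec (cos θ • u + sin θ • z) (cos θ • u + sin θ • z) * M).trace = 0 := by
  have hcont : Continuous fun θ : ℝ =>
      (vecMulVec (cos θ • u + sin θ • z) (cos θ • u + sin θ • z) * M).trace := by
    fun_prop
  obtain ⟨θ, -, hθ⟩ := intermediate_value_Icc' (by positivity : 0 ≤ π / 2)
    hcont.continuousOn (by simpa using And.intro hz hu)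
  exact ⟨θ, hθ⟩

theorem trace_multiset_sum_vecMulVec_mul (M : Matrix n n ℝ) (s : Multiset (n → ℝ)) :
    ((s.map fun v => vecMulVec v v).sum * M).trace =
      (s.map fun v => (vecMulVec v v * M).trace).sum := by
  rw [← Multiset.sum_map_mul_right, trace_multiset_sum, Multiset.map_map]
  rfl

theorem exists_isotropic_of_trace_multiset_sum_mul_eq_zero (M : Matrix n n ℝ)
    (s : Multiset (n → ℝ)) (hs : ((s.map fun v => vecMulVec v v).sum * M).trace = 0) :
    ∃ t : Multiset (n → ℝ), (∀ v ∈ t, (vecMulVec v v * M).trace = 0) ∧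
      (t.map fun v => vecMulVec v v).sum = (s.map fun v => vecMulVec v v).sum := by
  rw [trace_multiset_sum_vecMulVec_mul] at hs
  by_cases hnull : ∀ v ∈ s, (vecMulVec v v * M).trace = 0
  · exact ⟨s, hnull, rfl⟩
  push Not at hnull
  obtain ⟨u, hu, hQu⟩ := Multiset.exists_pos_of_sum_map_eq_zero hs hnull
  obtain ⟨z, hz, hQz⟩ := Multiset.exists_neg_of_sum_map_eq_zero hs hnull
  obtain ⟨r, rfl⟩ : ∃ r, s = u ::ₘ z ::ₘ r := by
    refine ⟨(s.erase u).erase z, ?_⟩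
    rw [Multiset.cons_erase (Multiset.mem_erase_of_ne (by rintro rfl; linarith) |>.mpr hz),
      Multiset.cons_erase hu]
  obtain ⟨θ, hθ⟩ := exists_trace_vecMulVec_rotate_mul_eq_zero M hQu.le hQz.le
  set X := cos θ • u + sin θ • z
  set Y := -sin θ • u + cos θ • z
  have hrot := vecMulVec_rotate_add u z θ
  have hY : (((Y ::ₘ r).map fun v => vecMulVec v v).sum * M).trace = 0 := by
    have hQ := congrArg (fun A => (A * M).trace) hrot
    simp only [add_mul, trace_add] at hQ
    rw [trace_multiset_sum_vecMulVec_mul]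
    simp only [Multiset.map_cons, Multiset.sum_cons] at hs ⊢
    linarith
  obtain ⟨t, ht, hsum⟩ := exists_isotropic_of_trace_multiset_sum_mul_eq_zero M (Y ::ₘ r) hY
  refine ⟨X ::ₘ t, ?_, ?_⟩
  · simpa [hθ] using ht
  · simp only [Multiset.map_cons, Multiset.sum_cons] at hsum ⊢
    rw [hsum, ← add_assoc, hrot, add_assoc]
termination_by Multiset.card s
decreasing_by simp_all

theorem PosSemidef.exists_isotropic_decomposition {ρ : Matrix n n ℝ} (hρ : ρ.PosSemidef)
    {M : Matrix n n ℝ} (h : (ρ * M).trace = 0) :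
    ∃ (m : ℕ) (v : Fin m → n → ℝ), (∀ k, (vecMulVec (v k) (v k) * M).trace = 0) ∧
      ρ = ∑ k, vecMulVec (v k) (v k) := by
  obtain ⟨m, w, rfl⟩ := posSemidef_iff_eq_sum_vecMulVec.mp hρ
  simp only [star_trivial] at h ⊢
  have hw : ∑ i, vecMulVec (w i) (w i) =
      ((Finset.univ.val.map w).map fun v => vecMulVec v v).sum := by
    rw [Multiset.map_map]
    rfl
  rw [hw] at h ⊢
  obtain ⟨t, ht, hsum⟩ := exists_isotropic_of_trace_multiset_sum_mul_eq_zero M _ h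
  refine ⟨t.toList.length, fun k => t.toList[k],
    fun k => ht _ (Multiset.mem_toList.mp (List.getElem_mem _)), ?_⟩
  rw [← hsum, ← Multiset.sum_map_toList]
  exact (Fin.sum_univ_fun_getElem _ _).symm

end Real

end Matrix

theorem trace_vecMulVec_mul_kronecker_y (v : Fin 2 × Fin 2 → ℝ) :
    (vecMulVec v v * (y ⊗ₖ y)).trace = 2 * (v (0, 0) * v (1, 1) - v (0, 1) * v (1, 0)) := by
  simp [trace, mul_apply, vecMulVec_apply, Fintype.sum_prod_type, Fin.sum_univ_two, y]
  ring

theorem trace_mul_y_eq_zero {A : Matrix (Fin 2) (Fin 2) ℝ} (hA : A.IsSymm) :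
    (A * y).trace = 0 := by
  simp [trace_fin_two, mul_apply, Fin.sum_univ_two, y, hA.apply 0 1]

theorem exists_smul_kronecker_of_trace_vecMulVec_mul_kronecker_y (v : Fin 2 × Fin 2 → ℝ)
    (hv : (vecMulVec v v * (y ⊗ₖ y)).trace = 0) :
    ∃ p : ℝ, 0 ≤ p ∧ ∃ A B : Matrix (Fin 2) (Fin 2) ℝ,
      (A.IsSymm ∧ A.PosSemidef ∧ A.trace = 1) ∧ (B.IsSymm ∧ B.PosSemidef ∧ B.trace = 1) ∧
      vecMulVec v v = p • (A ⊗ₖ B) := by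
  rw [trace_vecMulVec_mul_kronecker_y] at hv
  obtain ⟨a, b, rfl⟩ := exists_eq_mul_of_mul_eq_mul v (by linarith)
  have ha : (vecMulVec a a).PosSemidef := by simpa using posSemidef_vecMulVec_self_star a
  have hb : (vecMulVec b b).PosSemidef := by simpa using posSemidef_vecMulVec_self_star b
  obtain ⟨A, hA, hAa⟩ := ha.exists_eq_trace_smul
  obtain ⟨B, hB, hBb⟩ := hb.exists_eq_trace_smul
  refine ⟨(vecMulVec a a).trace * (vecMulVec b b).trace,
    mul_nonneg ha.trace_nonneg hb.trace_nonneg, A, B, hA, hB, ?_⟩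
  calc vecMulVec (fun p : Fin 2 × Fin 2 => a p.1 * b p.2) (fun p => a p.1 * b p.2)
      = vecMulVec a a ⊗ₖ vecMulVec b b := vecMulVec_mul_mul a a b b
    _ = ((vecMulVec a a).trace • A) ⊗ₖ ((vecMulVec b b).trace • B) := by rw [← hAa, ← hBb]
    _ = _ := by rw [smul_kronecker, kronecker_smul, smul_smul]

theorem realSeparable_of_eq_sum_vecMulVec {ρ : Matrix (Fin 2 × Fin 2) (Fin 2 × Fin 2) ℝ}
    (htr : ρ.trace = 1) {m : ℕ} (v : Fin m → Fin 2 × Fin 2 → ℝ)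
    (hv : ∀ k, (vecMulVec (v k) (v k) * (y ⊗ₖ y)).trace = 0)
    (hρ : ρ = ∑ k, vecMulVec (v k) (v k)) : RealSeparable ρ := by
  choose p hp A B hA hB hvAB using fun k =>
    exists_smul_kronecker_of_trace_vecMulVec_mul_kronecker_y (v k) (hv k)
  have hρAB : ρ = ∑ k, p k • (A k ⊗ₖ B k) := by simp only [hρ, hvAB]
  refine ⟨m, p, A, B, hp, ?_, hA, hB, hρAB⟩
  rw [← htr, hρAB, trace_sum]
  refine Finset.sum_congr rfl fun k _ => ?_
  simp [trace_kronecker, (hA k).2.2, (hB k).2.2]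

theorem RealSeparable.trace_mul_kronecker_y_eq_zero
    {ρ : Matrix (Fin 2 × Fin 2) (Fin 2 × Fin 2) ℝ} (h : RealSeparable ρ) :
    (ρ * (y ⊗ₖ y)).trace = 0 := by
  obtain ⟨n, p, A, B, -, -, hA, -, -, rfl⟩ := h
  simp [Finset.sum_mul, trace_sum, ← mul_kronecker_mul, trace_kronecker,
    trace_mul_y_eq_zero (hA _).1]

/-- **Proposition 6 of the paper.**
A two-rebit state is real-separable if and only if it has no σ_y ⊗ σ_y
component; equivalently, a two-rebit state is nonseparable iff it has
tomographically-nonlocal entanglement. -/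
theorem stmt6 (ρ : Matrix (Fin 2 × Fin 2) (Fin 2 × Fin 2) ℝ)
    (hρ : IsTwoRebitState ρ) :
    RealSeparable ρ ↔ (ρ * Y₄).trace = 0 := by
  obtain ⟨-, hpsd, htr⟩ := hρ
  rw [Y₄, mul_neg, trace_neg, neg_eq_zero]
  refine ⟨RealSeparable.trace_mul_kronecker_y_eq_zero, fun h => ?_⟩
  obtain ⟨m, v, hv, hρv⟩ := hpsd.exists_isotropic_decomposition h
  exact realSeparable_of_eq_sum_vecMulVec htr v hv hρv
end

section
/- Let ρ be a two-rebit state (real symmetric positive semidefinite 4×4 matrix of trace 1) and set Π_TL(ρ) := ρ − (1/4)·trace(ρ * Y₄) • Y₄. Then Π_TL(ρ) is real-separable if and only if Π_TL(ρ) is positive semidefinite. In other words, a two-rebit state lacks tomographically-local entanglement exactly when its tomographically-local projection is a valid two-rebit state. -/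
/-!
On ℝ² ⊗ ℝ², the quadratic form `w ↦ wᵀ Y₄ w` is `−2 det w` (with `w` read as a 2×2 matrix),
so its isotropic vectors are exactly the product vectors `a ⊗ b`. Since `Y₄² = 1`, the projection
`Π_TL` keeps the trace and kills `tr(· Y₄)`. A positive semidefinite `σ` with `tr(σ Y₄) = 0` is a
sum `∑ vᵢ vᵢᵀ` whose quadratic values `vᵢᵀ Y₄ vᵢ` add up to zero; rotating a pair `(vᵢ, vⱼ)` with
values of opposite signs leaves `vᵢvᵢᵀ + vⱼvⱼᵀ` unchanged and, by the intermediate value theorem,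
can make one of the two isotropic. Repeating this writes `σ` as a sum of rank-one product terms,
i.e. as a separable matrix.
-/

open Matrix Kronecker

/-- The tomographically local projection Π_TL on two-rebit matrices. -/
noncomputable def PiTL (ρ : Matrix (Fin 2 × Fin 2) (Fin 2 × Fin 2) ℝ) :
    Matrix (Fin 2 × Fin 2) (Fin 2 × Fin 2) ℝ :=
  ρ - ((1 / 4 : ℝ) * (ρ * Y₄).trace) • Y₄

theorem Fintype.sum_comp_update_add {ι V M : Type*} [Fintype ι] [DecidableEq ι] [AddCommMonoid M]
    (F : V → M) (t : ι → V) (k : ι) (b : V) :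
    ∑ i, F (Function.update t k b i) + F (t k) = ∑ i, F (t i) + F b := by
  have hk := Finset.mem_univ k
  have hcomp : (fun i => F (Function.update t k b i)) = Function.update (F ∘ t) k (F b) :=
    Function.comp_update F t k b
  rw [hcomp, Finset.sum_update_of_mem hk, Finset.sdiff_singleton_eq_erase,
    ← Finset.add_sum_erase _ (fun i => F (t i)) hk]
  simp only [Function.comp_apply]
  abel

theorem Matrix.vecMulVec_rotate_add_s7 {κ : Type*} (a b : κ → ℝ) (θ : ℝ) :
    vecMulVec (Real.cos θ • a + Real.sin θ • b) (Real.cos θ • a + Real.sin θ • b) +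
      vecMulVec (-Real.sin θ • a + Real.cos θ • b) (-Real.sin θ • a + Real.cos θ • b) =
      vecMulVec a a + vecMulVec b b := by
  ext i j
  simp only [add_apply, vecMulVec_apply, Pi.add_apply, Pi.smul_apply, smul_eq_mul]
  linear_combination (a i * a j + b i * b j) * Real.cos_sq_add_sin_sq θ

section IsotropicDecomposition

variable {κ : Type*} [Fintype κ]

theorem Matrix.trace_vecMulVec_self_mul (Y : Matrix κ κ ℝ) (v : κ → ℝ) :
    (vecMulVec v v * Y).trace = v ⬝ᵥ Y *ᵥ v := by
  rw [vecMulVec_mul, trace_vecMulVec, dotProduct_comm, dotProduct_mulVec]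

theorem exists_isotropic_rotation (Y : Matrix κ κ ℝ) (a b : κ → ℝ)
    (hab : (a ⬝ᵥ Y *ᵥ a) * (b ⬝ᵥ Y *ᵥ b) ≤ 0) :
    ∃ a' b' : κ → ℝ, a' ⬝ᵥ Y *ᵥ a' = 0 ∧
      vecMulVec a' a' + vecMulVec b' b' = vecMulVec a a + vecMulVec b b := by
  set r : ℝ → κ → ℝ := fun θ => Real.cos θ • a + Real.sin θ • b
  have hcont : Continuous fun θ => r θ ⬝ᵥ Y *ᵥ r θ := by fun_prop
  have hzero : (0 : ℝ) ∈ Set.uIcc (r 0 ⬝ᵥ Y *ᵥ r 0) (r (Real.pi / 2) ⬝ᵥ Y *ᵥ r (Real.pi / 2)) := by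
    simp only [r, Real.cos_zero, Real.sin_zero, Real.cos_pi_div_two, Real.sin_pi_div_two,
      one_smul, zero_smul, add_zero, zero_add, Set.mem_uIcc]
    rcases mul_nonpos_iff.mp hab with h | h
    · exact Or.inr ⟨h.2, h.1⟩
    · exact Or.inl ⟨h.1, h.2⟩
  obtain ⟨θ, -, hθ⟩ := intermediate_value_uIcc hcont.continuousOn hzero
  exact ⟨r θ, _, hθ, vecMulVec_rotate_add_s7 a b θ⟩

theorem exists_isotropic_of_sum_eq_zero (Y : Matrix κ κ ℝ) :
    ∀ {n : ℕ} (v : Fin n → κ → ℝ), ∑ i, v i ⬝ᵥ Y *ᵥ v i = 0 →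
      ∃ w : Fin n → κ → ℝ, (∀ i, w i ⬝ᵥ Y *ᵥ w i = 0) ∧
        ∑ i, vecMulVec (w i) (w i) = ∑ i, vecMulVec (v i) (v i)
  | 0, v, _ => ⟨v, finZeroElim, rfl⟩
  | n + 1, v, hsum => by
    induction v using Fin.consCases with | cons v₀ t => ?_
    simp only [Fin.sum_univ_succ, Fin.cons_zero, Fin.cons_succ] at hsum ⊢
    by_cases hv₀ : v₀ ⬝ᵥ Y *ᵥ v₀ = 0
    · obtain ⟨w, hw, hwsum⟩ := exists_isotropic_of_sum_eq_zero Y t (by linarith)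
      refine ⟨Fin.cons v₀ w, Fin.cases hv₀ hw, ?_⟩
      simp only [Fin.cons_zero, Fin.cons_succ, hwsum]
    obtain ⟨k, hk⟩ : ∃ k, (v₀ ⬝ᵥ Y *ᵥ v₀) * (t k ⬝ᵥ Y *ᵥ t k) ≤ 0 := by
      by_contra! hpos
      have := Finset.sum_nonneg fun k (_ : k ∈ Finset.univ) => (hpos k).le
      rw [← Finset.mul_sum, show ∑ k, t k ⬝ᵥ Y *ᵥ t k = -(v₀ ⬝ᵥ Y *ᵥ v₀) by linarith] at this
      exact hv₀ (by nlinarith)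
    obtain ⟨a, b, ha, hab⟩ := exists_isotropic_rotation Y v₀ (t k) hk
    have hqab : a ⬝ᵥ Y *ᵥ a + b ⬝ᵥ Y *ᵥ b = v₀ ⬝ᵥ Y *ᵥ v₀ + t k ⬝ᵥ Y *ᵥ t k := by
      simpa only [add_mul, trace_add, trace_vecMulVec_self_mul] using
        congrArg (fun M => (M * Y).trace) hab
    obtain ⟨w, hw, hwsum⟩ := exists_isotropic_of_sum_eq_zero Y (Function.update t k b) (by
      linarith [Fintype.sum_comp_update_add (fun u => u ⬝ᵥ Y *ᵥ u) t k b])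
    refine ⟨Fin.cons a w, Fin.cases ha hw, ?_⟩
    simp only [Fin.cons_zero, Fin.cons_succ, hwsum]
    linear_combination (norm := abel)
      Fintype.sum_comp_update_add (fun u => vecMulVec u u) t k b + hab

theorem Matrix.PosSemidef.exists_isotropic_decomposition_s7 {σ Y : Matrix κ κ ℝ} (hσ : σ.PosSemidef)
    (hσY : (σ * Y).trace = 0) :
    ∃ (n : ℕ) (w : Fin n → κ → ℝ), (∀ i, w i ⬝ᵥ Y *ᵥ w i = 0) ∧
      σ = ∑ i, vecMulVec (w i) (w i) := by
  obtain ⟨n, v, rfl⟩ := posSemidef_iff_eq_sum_vecMulVec.mp hσ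
  simp only [star_trivial] at hσY ⊢
  rw [Finset.sum_mul, trace_sum] at hσY
  simp only [trace_vecMulVec_self_mul] at hσY
  obtain ⟨w, hw, hwsum⟩ := exists_isotropic_of_sum_eq_zero Y v hσY
  exact ⟨n, w, hw, hwsum.symm⟩

end IsotropicDecomposition

theorem Matrix.PosSemidef.exists_eq_trace_smul_s7 {n : Type*} [Fintype n] [DecidableEq n] [Nonempty n]
    {M : Matrix n n ℝ} (hM : M.PosSemidef) :
    ∃ A : Matrix n n ℝ, (A.IsSymm ∧ A.PosSemidef ∧ A.trace = 1) ∧ M = M.trace • A := by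
  by_cases htr : M.trace = 0
  · refine ⟨(Fintype.card n : ℝ)⁻¹ • 1,
      ⟨isSymm_one.smul _, PosSemidef.one.smul (by positivity), ?_⟩,
      by rw [htr, zero_smul, ← hM.trace_eq_zero_iff, htr]⟩
    rw [trace_smul, trace_one, smul_eq_mul, inv_mul_cancel₀ (by positivity)]
  · refine ⟨M.trace⁻¹ • M, ⟨(isHermitian_iff_isSymm.mp hM.isHermitian).smul _,
      hM.smul (inv_nonneg.mpr hM.trace_nonneg), ?_⟩, ?_⟩
    · rw [trace_smul, smul_eq_mul, inv_mul_cancel₀ htr]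
    · rw [smul_smul, mul_inv_cancel₀ htr, one_smul]

theorem realSeparable_sum_kronecker {n : ℕ} (A B : Fin n → Matrix (Fin 2) (Fin 2) ℝ)
    (hA : ∀ k, (A k).PosSemidef) (hB : ∀ k, (B k).PosSemidef)
    (htr : (∑ k, A k ⊗ₖ B k).trace = 1) : RealSeparable (∑ k, A k ⊗ₖ B k) := by
  choose A' hA' hAA' using fun k => (hA k).exists_eq_trace_smul_s7
  choose B' hB' hBB' using fun k => (hB k).exists_eq_trace_smul_s7
  refine ⟨n, fun k => (A k).trace * (B k).trace, A', B',
    fun k => mul_nonneg (hA k).trace_nonneg (hB k).trace_nonneg, ?_, hA', hB', ?_⟩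
  · simpa only [trace_sum, trace_kronecker] using htr
  · refine Finset.sum_congr rfl fun k _ => ?_
    calc A k ⊗ₖ B k = ((A k).trace • A' k) ⊗ₖ ((B k).trace • B' k) := by
          rw [← hAA' k, ← hBB' k]
      _ = ((A k).trace * (B k).trace) • (A' k ⊗ₖ B' k) := by
          rw [smul_kronecker, kronecker_smul, smul_smul]

theorem RealSeparable.posSemidef {σ : Matrix (Fin 2 × Fin 2) (Fin 2 × Fin 2) ℝ}
    (hσ : RealSeparable σ) : σ.PosSemidef := by
  obtain ⟨n, p, A, B, hp, -, hA, hB, rfl⟩ := hσ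
  exact posSemidef_sum _ fun k _ => ((hA k).2.1.kronecker (hB k).2.1).smul (hp k)

theorem y_mul_y : y * y = -1 := by
  ext i j
  fin_cases i <;> fin_cases j <;> simp [y]

theorem Y₄_mul_Y₄ : Y₄ * Y₄ = 1 := by
  rw [Y₄, neg_mul_neg, ← mul_kronecker_mul, y_mul_y,
    ← neg_one_smul ℝ (1 : Matrix (Fin 2) (Fin 2) ℝ), smul_kronecker, kronecker_smul, smul_smul,
    one_kronecker_one]
  norm_num

theorem trace_Y₄ : Y₄.trace = 0 := by
  simp [Y₄, y, trace_kronecker, trace_fin_two]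

theorem dotProduct_Y₄_mulVec (w : Fin 2 × Fin 2 → ℝ) :
    w ⬝ᵥ Y₄ *ᵥ w = 2 * (w (0, 1) * w (1, 0) - w (0, 0) * w (1, 1)) := by
  simp only [dotProduct, mulVec, Y₄, y, Matrix.neg_apply, kroneckerMap_apply, of_apply, cons_val',
    cons_val_fin_one, neg_mul, Finset.sum_neg_distrib, Fintype.sum_prod_type, Fin.sum_univ_two,
    cons_val_zero, cons_val_one, neg_add_rev, mul_neg, mul_one, neg_neg, mul_zero, zero_mul,
    neg_zero, add_zero, zero_add, one_mul]
  ring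

theorem exists_eq_mul_of_mul_eq_mul_s7 (w : Fin 2 × Fin 2 → ℝ)
    (hw : w (0, 0) * w (1, 1) = w (0, 1) * w (1, 0)) :
    ∃ a b : Fin 2 → ℝ, ∀ i j, w (i, j) = a i * b j := by
  by_cases h₀₀ : w (0, 0) = 0
  · have : w (0, 1) * w (1, 0) = 0 := by rw [← hw, h₀₀, zero_mul]
    rcases mul_eq_zero.mp this with h₀₁ | h₁₀
    · exact ⟨![0, 1], ![w (1, 0), w (1, 1)], by simp [Fin.forall_fin_two, h₀₀, h₀₁]⟩
    · exact ⟨![w (0, 1), w (1, 1)], ![0, 1], by simp [Fin.forall_fin_two, h₀₀, h₁₀]⟩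
  · refine ⟨![w (0, 0), w (1, 0)], ![1, w (0, 1) / w (0, 0)], ?_⟩
    simp only [Fin.forall_fin_two, Matrix.cons_val_zero, Matrix.cons_val_one, mul_one, true_and]
    exact ⟨by field_simp, by field_simp; linarith⟩

theorem exists_kronecker_of_isotropic_Y₄ {w : Fin 2 × Fin 2 → ℝ} (hw : w ⬝ᵥ Y₄ *ᵥ w = 0) :
    ∃ a b : Fin 2 → ℝ, vecMulVec w w = vecMulVec a a ⊗ₖ vecMulVec b b := by
  obtain ⟨a, b, hab⟩ := exists_eq_mul_of_mul_eq_mul_s7 w (by rw [dotProduct_Y₄_mulVec] at hw; linarith)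
  refine ⟨a, b, ?_⟩
  ext ⟨i, j⟩ ⟨k, l⟩
  simp only [vecMulVec_apply, kroneckerMap_apply, hab]
  ring

theorem realSeparable_of_posSemidef {σ : Matrix (Fin 2 × Fin 2) (Fin 2 × Fin 2) ℝ}
    (hσ : σ.PosSemidef) (htr : σ.trace = 1) (hσY : (σ * Y₄).trace = 0) : RealSeparable σ := by
  obtain ⟨n, w, hw, rfl⟩ := hσ.exists_isotropic_decomposition_s7 hσY
  choose a b hab using fun i => exists_kronecker_of_isotropic_Y₄ (hw i)
  simp only [hab] at htr ⊢
  exact realSeparable_sum_kronecker _ _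
    (fun i => by simpa using posSemidef_vecMulVec_self_star (a i))
    (fun i => by simpa using posSemidef_vecMulVec_self_star (b i)) htr

theorem trace_PiTL (ρ : Matrix (Fin 2 × Fin 2) (Fin 2 × Fin 2) ℝ) : (PiTL ρ).trace = ρ.trace := by
  rw [PiTL, trace_sub, trace_smul, trace_Y₄, smul_zero, sub_zero]

theorem trace_PiTL_mul_Y₄ (ρ : Matrix (Fin 2 × Fin 2) (Fin 2 × Fin 2) ℝ) :
    (PiTL ρ * Y₄).trace = 0 := by
  rw [PiTL, sub_mul, smul_mul_assoc, Y₄_mul_Y₄, trace_sub, trace_smul, trace_one,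
    Fintype.card_prod, Fintype.card_fin, smul_eq_mul]
  push_cast
  ring

/-- **Proposition 7, item 1 of the paper.**
A two-rebit state lacks tomographically-local entanglement (i.e. its
tomographically-local projection is real-separable) if and only if its
tomographically-local projection is positive semidefinite, i.e. a valid
two-rebit state. -/
theorem stmt7 (ρ : Matrix (Fin 2 × Fin 2) (Fin 2 × Fin 2) ℝ)
    (hρ : IsTwoRebitState ρ) :
    RealSeparable (PiTL ρ) ↔ (PiTL ρ).PosSemidef :=
  ⟨RealSeparable.posSemidef, fun h =>
    realSeparable_of_posSemidef h (by rw [trace_PiTL, hρ.2.2]) (trace_PiTL_mul_Y₄ ρ)⟩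
end

section
/- Let ρ be a two-rebit state (real symmetric positive semidefinite 4×4 matrix of trace 1), and let ι(ρ) be the complex 4×4 matrix obtained by mapping the entries of ρ into ℂ. If ι(ρ) is complex-separable, then Π_TL(ρ) := ρ − (1/4)·trace(ρ * Y₄) • Y₄ is real-separable; that is, a two-rebit state whose complex embedding is separable in unrestricted complex quantum theory lacks tomographically-local entanglement. -/
open Matrix Kronecker
open scoped ComplexOrder

/-- Complex separability: a convex combination of Kronecker products of
complex positive semidefinite trace-one 2×2 matrices. -/
def ComplexSeparable (σ : Matrix (Fin 2 × Fin 2) (Fin 2 × Fin 2) ℂ) : Prop :=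
  ∃ (n : ℕ) (p : Fin n → ℝ) (A B : Fin n → Matrix (Fin 2) (Fin 2) ℂ),
    (∀ k, 0 ≤ p k) ∧ ((∑ k, p k) = 1) ∧
    (∀ k, (A k).PosSemidef ∧ (A k).trace = 1) ∧
    (∀ k, (B k).PosSemidef ∧ (B k).trace = 1) ∧
    σ = ∑ k, (p k : ℂ) • (A k ⊗ₖ B k)

/-!
Take real parts in a complex separable decomposition `ρ = ∑ pₖ Aₖ ⊗ Bₖ`. The imaginary part of a
Hermitian 2×2 matrix is a multiple of `y`, so `Re (Aₖ ⊗ Bₖ) = Re Aₖ ⊗ Re Bₖ + aₖbₖ Y₄`, and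
`Re Aₖ`, `Re Bₖ` are again real states. Hence `ρ = σ + c Y₄` with `σ` real-separable. Since a
symmetric matrix is trace-orthogonal to the antisymmetric `y`, `σ` is trace-orthogonal to `Y₄`,
and `Π_TL` removes exactly the `Y₄` component, leaving `σ`.
-/

namespace Matrix

section RealPart

variable {m n : Type*}

lemma IsHermitian.isSymm_map_re {M : Matrix n n ℂ} (hM : M.IsHermitian) :
    (M.map Complex.re).IsSymm := by
  ext i j
  simpa using congrArg Complex.re (hM.apply i j)

lemma PosSemidef.map_re [Fintype n] {M : Matrix n n ℂ} (hM : M.PosSemidef) :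
    (M.map Complex.re).PosSemidef := by
  refine .of_dotProduct_mulVec_nonneg
    (isHermitian_iff_isSymm.mpr hM.isHermitian.isSymm_map_re) fun x => ?_
  have h := (Complex.nonneg_iff.mp (hM.dotProduct_mulVec_nonneg (fun i => (x i : ℂ)))).1
  simpa [dotProduct, mulVec, Complex.re_sum, Finset.mul_sum] using h

lemma trace_map_re [Fintype n] (M : Matrix n n ℂ) : (M.map Complex.re).trace = M.trace.re := by
  simp [trace, Complex.re_sum]

lemma PosSemidef.map_re_isSymm_posSemidef_trace_eq_one [Fintype n] {M : Matrix n n ℂ}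
    (hM : M.PosSemidef) (htr : M.trace = 1) :
    (M.map Complex.re).IsSymm ∧ (M.map Complex.re).PosSemidef ∧ (M.map Complex.re).trace = 1 :=
  ⟨hM.isHermitian.isSymm_map_re, hM.map_re, by simp [trace_map_re, htr]⟩

lemma kronecker_map_re (A : Matrix m m ℂ) (B : Matrix n n ℂ) :
    (A ⊗ₖ B).map Complex.re =
      A.map Complex.re ⊗ₖ B.map Complex.re - A.map Complex.im ⊗ₖ B.map Complex.im := by
  ext ⟨i₁, i₂⟩ ⟨j₁, j₂⟩
  simp

end RealPart

lemma IsHermitian.map_im_eq_smul_y {M : Matrix (Fin 2) (Fin 2) ℂ} (hM : M.IsHermitian) :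
    M.map Complex.im = (M 1 0).im • y := by
  have h00 := congrArg Complex.im (hM.apply 0 0)
  have h01 := congrArg Complex.im (hM.apply 0 1)
  have h11 := congrArg Complex.im (hM.apply 1 1)
  simp only [Complex.star_def, Complex.conj_im] at h00 h01 h11
  ext i j
  fin_cases i <;> fin_cases j <;> simp [y] <;> linarith

lemma IsSymm.trace_mul_y {S : Matrix (Fin 2) (Fin 2) ℝ} (hS : S.IsSymm) : (S * y).trace = 0 := by
  simp [trace_fin_two, mul_apply, y, hS.apply 0 1]

lemma IsHermitian.kronecker_map_re_eq {A B : Matrix (Fin 2) (Fin 2) ℂ} (hA : A.IsHermitian)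
    (hB : B.IsHermitian) :
    (A ⊗ₖ B).map Complex.re =
      A.map Complex.re ⊗ₖ B.map Complex.re + ((A 1 0).im * (B 1 0).im) • Y₄ := by
  rw [kronecker_map_re, hA.map_im_eq_smul_y, hB.map_im_eq_smul_y, smul_kronecker, kronecker_smul,
    smul_smul, Y₄, smul_neg, sub_eq_add_neg]

end Matrix

open Matrix

lemma trace_kronecker_mul_Y₄ {S T : Matrix (Fin 2) (Fin 2) ℝ} (hS : S.IsSymm) :
    ((S ⊗ₖ T) * Y₄).trace = 0 := by
  rw [Y₄, Matrix.mul_neg, ← mul_kronecker_mul, trace_neg, trace_kronecker, hS.trace_mul_y,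
    zero_mul, neg_zero]

lemma trace_Y₄_mul_Y₄ : (Y₄ * Y₄).trace = 4 := by
  have hy : (y * y).trace = -2 := by
    simp [y, trace_fin_two]
    norm_num
  rw [Y₄, Matrix.neg_mul, Matrix.mul_neg, neg_neg, ← mul_kronecker_mul, trace_kronecker, hy]
  norm_num

lemma PiTL_add_smul_Y₄ {σ : Matrix (Fin 2 × Fin 2) (Fin 2 × Fin 2) ℝ}
    (hσ : (σ * Y₄).trace = 0) (c : ℝ) : PiTL (σ + c • Y₄) = σ := by
  rw [PiTL, Matrix.add_mul, trace_add, hσ, smul_mul, trace_smul, trace_Y₄_mul_Y₄, smul_eq_mul,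
    show (1 / 4 : ℝ) * (0 + c * 4) = c by ring, add_sub_cancel_right]

lemma eq_sum_kronecker_add_smul_Y₄ {ρ : Matrix (Fin 2 × Fin 2) (Fin 2 × Fin 2) ℝ} {n : ℕ}
    {p : Fin n → ℝ} {A B : Fin n → Matrix (Fin 2) (Fin 2) ℂ}
    (hA : ∀ k, (A k).IsHermitian) (hB : ∀ k, (B k).IsHermitian)
    (hρ : ρ.map Complex.ofReal = ∑ k, (p k : ℂ) • (A k ⊗ₖ B k)) :
    ρ = ∑ k, p k • ((A k).map Complex.re ⊗ₖ (B k).map Complex.re) +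
      (∑ k, p k * ((A k 1 0).im * (B k 1 0).im)) • Y₄ := by
  calc ρ = (ρ.map Complex.ofReal).map Complex.re := by ext; simp
    _ = ∑ k, p k • (A k ⊗ₖ B k).map Complex.re := by
      rw [hρ]; ext; simp [Matrix.sum_apply, Complex.re_sum]
    _ = _ := by
      simp only [fun k => (hA k).kronecker_map_re_eq (hB k), smul_add, Finset.sum_add_distrib,
        smul_smul, Finset.sum_smul]

theorem stmt8_general (ρ : Matrix (Fin 2 × Fin 2) (Fin 2 × Fin 2) ℝ)
    (hsep : ComplexSeparable (ρ.map (Complex.ofReal))) :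
    RealSeparable (PiTL ρ) := by
  obtain ⟨n, p, A, B, hp, hp_sum, hA, hB, hρ⟩ := hsep
  have hρ_decomp := eq_sum_kronecker_add_smul_Y₄ (fun k => (hA k).1.isHermitian)
    (fun k => (hB k).1.isHermitian) hρ
  have hσ : ((∑ k, p k • ((A k).map Complex.re ⊗ₖ (B k).map Complex.re)) * Y₄).trace = 0 := by
    simp [Finset.sum_mul, trace_sum, trace_kronecker_mul_Y₄ (hA _).1.isHermitian.isSymm_map_re]
  refine ⟨n, p, fun k => (A k).map Complex.re, fun k => (B k).map Complex.re, hp, hp_sum,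
    fun k => (hA k).1.map_re_isSymm_posSemidef_trace_eq_one (hA k).2,
    fun k => (hB k).1.map_re_isSymm_posSemidef_trace_eq_one (hB k).2, ?_⟩
  rw [hρ_decomp, PiTL_add_smul_Y₄ hσ]

/-- **Proposition 7, item 2 of the paper.**
If the complex embedding of a two-rebit state is separable in unrestricted
complex quantum theory, then the state lacks tomographically-local
entanglement: its tomographically-local projection is real-separable. -/
theorem stmt8 (ρ : Matrix (Fin 2 × Fin 2) (Fin 2 × Fin 2) ℝ)
    (hρ : IsTwoRebitState ρ)
    (hsep : ComplexSeparable (ρ.map (Complex.ofReal))) :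
    RealSeparable (PiTL ρ) :=
  stmt8_general ρ hsep
end

section
/- Let X be the real 2×2 matrix with rows (0,1),(1,0) and Z := diag(1,−1), and define the Bell state ρ_Φ := (1/4)(I₄ + X ⊗ₖ X + Z ⊗ₖ Z − Y₄). Then: (a) ρ_Φ is a two-rebit state (real symmetric positive semidefinite with trace 1); (b) trace(ρ_Φ * Y₄) = −1 ≠ 0, so ρ_Φ has tomographically-nonlocal entanglement; and (c) Π_TL(ρ_Φ) = (1/4)(I₄ + X ⊗ₖ X + Z ⊗ₖ Z) is not positive semidefinite and hence not real-separable, so ρ_Φ also has tomographically-local entanglement. -/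
open Matrix Kronecker

/-- The Pauli X matrix over ℝ. -/
noncomputable def Xm : Matrix (Fin 2) (Fin 2) ℝ := !![0, 1; 1, 0]

/-- The Pauli Z matrix over ℝ. -/
noncomputable def Zm : Matrix (Fin 2) (Fin 2) ℝ := !![1, 0; 0, -1]

/-- The Bell state Φ⁺ as a two-rebit density matrix. -/
noncomputable def ρΦ : Matrix (Fin 2 × Fin 2) (Fin 2 × Fin 2) ℝ :=
  (1 / 4 : ℝ) • ((1 : Matrix (Fin 2 × Fin 2) (Fin 2 × Fin 2) ℝ)
    + Xm ⊗ₖ Xm + Zm ⊗ₖ Zm - Y₄)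

/-! The Bell state is `½ φφᵀ` for `φ = e₀₀ + e₁₁`, hence a state. Removing its `σ_y ⊗ σ_y`
component leaves `¼(I + X⊗X + Z⊗Z)`, which has eigenvalue `-¼` on the singlet `e₀₁ - e₁₀`;
but a real-separable matrix is a convex combination of Kronecker products of positive
semidefinite matrices, hence positive semidefinite. -/

namespace Matrix

variable {n R : Type*} [Fintype n] [CommRing R] [PartialOrder R] [StarRing R] [StarOrderedRing R]
  [IsStrictOrderedRing R] [NoZeroDivisors R]

theorem not_posSemidef_of_mulVec_eq_smul {M : Matrix n n R} {v : n → R} {c : R}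
    (hv : v ≠ 0) (hc : c < 0) (h : M *ᵥ v = c • v) : ¬ M.PosSemidef := fun hM => by
  have hquad := hM.dotProduct_mulVec_nonneg v
  rw [h, dotProduct_smul, smul_eq_mul] at hquad
  exact (mul_neg_of_neg_of_pos hc (dotProduct_star_self_pos_iff.mpr hv)).not_ge hquad

end Matrix

theorem RealSeparable.posSemidef_s10 {ρ : Matrix (Fin 2 × Fin 2) (Fin 2 × Fin 2) ℝ}
    (h : RealSeparable ρ) : ρ.PosSemidef := by
  obtain ⟨n, p, A, B, hp, -, hA, hB, rfl⟩ := h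
  exact posSemidef_sum _ fun k _ => ((hA k).2.1.kronecker (hB k).2.1).smul (hp k)

def bellVec : Fin 2 × Fin 2 → ℝ := fun p => if p.1 = p.2 then 1 else 0

def singletVec : Fin 2 × Fin 2 → ℝ := Pi.single (0, 1) 1 - Pi.single (1, 0) 1

theorem ρΦ_eq_smul_vecMulVec : ρΦ = (1 / 2 : ℝ) • vecMulVec bellVec bellVec := by
  ext ⟨i, j⟩ ⟨k, l⟩
  fin_cases i <;> fin_cases j <;> fin_cases k <;> fin_cases l <;>
    norm_num [ρΦ, Y₄, Xm, Zm, y, bellVec, vecMulVec_apply, one_apply]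

theorem isTwoRebitState_ρΦ : IsTwoRebitState ρΦ := by
  have hpsd : ρΦ.PosSemidef := by
    rw [ρΦ_eq_smul_vecMulVec]
    simpa using (posSemidef_vecMulVec_self_star bellVec).smul (by norm_num : (0 : ℝ) ≤ 1 / 2)
  refine ⟨isHermitian_iff_isSymm.mp hpsd.isHermitian, hpsd, ?_⟩
  rw [ρΦ_eq_smul_vecMulVec, trace_smul, trace_vecMulVec]
  simp [bellVec, dotProduct, Fintype.sum_prod_type]

theorem trace_ρΦ_mul_Y₄ : (ρΦ * Y₄).trace = -1 := by
  norm_num [ρΦ, Y₄, Xm, Zm, y, trace, mul_apply, Fin.sum_univ_succ, one_apply,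
    Fintype.sum_prod_type]

theorem PiTL_ρΦ : PiTL ρΦ = (1 / 4 : ℝ) • ((1 : Matrix (Fin 2 × Fin 2) (Fin 2 × Fin 2) ℝ)
    + Xm ⊗ₖ Xm + Zm ⊗ₖ Zm) := by
  rw [PiTL, trace_ρΦ_mul_Y₄, ρΦ]
  module

theorem PiTL_ρΦ_mulVec_singletVec : PiTL ρΦ *ᵥ singletVec = (-1 / 4 : ℝ) • singletVec := by
  rw [PiTL_ρΦ]
  ext ⟨i, j⟩
  fin_cases i <;> fin_cases j <;>
    norm_num [Xm, Zm, singletVec, mulVec, dotProduct, Fintype.sum_prod_type, one_apply]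

theorem not_posSemidef_PiTL_ρΦ : ¬ (PiTL ρΦ).PosSemidef :=
  not_posSemidef_of_mulVec_eq_smul (by simp [singletVec, funext_iff]) (by norm_num)
    PiTL_ρΦ_mulVec_singletVec

/-- **The Bell state has both kinds of entanglement.**
(a) ρ_Φ is a two-rebit state; (b) its σ_y ⊗ σ_y component is −1 ≠ 0, so it has
tomographically-nonlocal entanglement; (c) its tomographically-local projection
is (1/4)(I₄ + X⊗X + Z⊗Z), which is not positive semidefinite and not
real-separable, so ρ_Φ also has tomographically-local entanglement. -/
theorem stmt10 :
    IsTwoRebitState ρΦ ∧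
    ((ρΦ * Y₄).trace = -1 ∧ (ρΦ * Y₄).trace ≠ 0) ∧
    PiTL ρΦ = (1 / 4 : ℝ) • ((1 : Matrix (Fin 2 × Fin 2) (Fin 2 × Fin 2) ℝ)
      + Xm ⊗ₖ Xm + Zm ⊗ₖ Zm) ∧
    ¬ (PiTL ρΦ).PosSemidef ∧
    ¬ RealSeparable (PiTL ρΦ) :=
  ⟨isTwoRebitState_ρΦ, ⟨trace_ρΦ_mul_Y₄, by rw [trace_ρΦ_mul_Y₄]; norm_num⟩, PiTL_ρΦ,
    not_posSemidef_PiTL_ρΦ, fun h => not_posSemidef_PiTL_ρΦ h.posSemidef_s10⟩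
end

section
/- Let ρ be a two-rebit state with Π_TL(ρ) = Σ_k p_k • (A_k ⊗ₖ B_k), with p_k ≥ 0 summing to 1 and real symmetric positive semidefinite trace-one 2×2 matrices A_k, B_k. Let e be any real symmetric 4×4 matrix (a joint effect on the input system S and the first rebit A). For an 8×8 matrix N indexed by (Fin 2 × Fin 2) × Fin 2, write Tr_{SA}(N) for the 2×2 matrix with entries Σ_{s,a} N_{((s,a),b),((s,a),b')}. Then for every real symmetric 2×2 matrix ψ, Tr_{SA}((e ⊗ₖ I₂) * R(ψ ⊗ₖ ρ)) = Σ_k p_k · trace(e * (ψ ⊗ₖ A_k)) • B_k, where R reindexes ψ ⊗ₖ ρ from index type Fin 2 × (Fin 2 × Fin 2) to (Fin 2 × Fin 2) × Fin 2 along the product associator. In particular, the teleportage induced by ρ is a measure-and-prepare map, so ρ is useless for teleportation. -/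
open Matrix Kronecker

/-- Partial trace over the first two tensor factors (the systems S and A):
(Tr_{SA} N)_{b b'} = Σ_{s,a} N_{((s,a),b),((s,a),b')}. -/
noncomputable def trSA
    (N : Matrix ((Fin 2 × Fin 2) × Fin 2) ((Fin 2 × Fin 2) × Fin 2) ℝ) :
    Matrix (Fin 2) (Fin 2) ℝ :=
  Matrix.of fun b b' => ∑ sa : Fin 2 × Fin 2, N (sa, b) (sa, b')

/-- Reindexing of ψ ⊗ₖ ρ from index type Fin 2 × (Fin 2 × Fin 2)
to (Fin 2 × Fin 2) × Fin 2 along the product associator. -/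
noncomputable def assocReindex
    (N : Matrix (Fin 2 × (Fin 2 × Fin 2)) (Fin 2 × (Fin 2 × Fin 2)) ℝ) :
    Matrix ((Fin 2 × Fin 2) × Fin 2) ((Fin 2 × Fin 2) × Fin 2) ℝ :=
  Matrix.reindex (Equiv.prodAssoc (Fin 2) (Fin 2) (Fin 2)).symm
    (Equiv.prodAssoc (Fin 2) (Fin 2) (Fin 2)).symm N

/-! The teleportage `ρ ↦ Tr_SA((e ⊗ 1)(ψ ⊗ ρ))` is linear in `ρ`, and `ρ` differs from `Π_TL(ρ)`
only by a multiple of `Y₄ = σ_y ⊗ σ_y`. A product `A ⊗ B` is sent to `tr(e (ψ ⊗ A)) • B`, so the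
separable part yields a measure-and-prepare map, while the `Y₄` part yields a multiple of
`tr(e (ψ ⊗ y))`, which vanishes: `e` is symmetric and `ψ ⊗ y` is antisymmetric. -/
theorem Matrix.trace_mul_eq_zero_of_isSymm_of_transpose_eq_neg {n R : Type*} [Fintype n]
    [CommRing R] [NoZeroDivisors R] [CharZero R] {S K : Matrix n n R} (hS : S.IsSymm)
    (hK : Kᵀ = -K) : (S * K).trace = 0 := by
  refine CharZero.neg_eq_self_iff.mp ?_
  calc -(S * K).trace = (K * S)ᵀ.trace := by
        rw [transpose_mul, hK, hS.eq, Matrix.mul_neg, trace_neg]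
    _ = (S * K).trace := by rw [trace_transpose, trace_mul_comm]

theorem Matrix.kronecker_transpose_eq_neg {m n R : Type*} [Ring R] {S : Matrix m m R}
    {K : Matrix n n R} (hS : S.IsSymm) (hK : Kᵀ = -K) : (S ⊗ₖ K)ᵀ = -(S ⊗ₖ K) := by
  rw [← kroneckerMap_transpose, hS.eq, hK]
  ext ⟨i, j⟩ ⟨k, l⟩
  simp

noncomputable def teleportage (e : Matrix (Fin 2 × Fin 2) (Fin 2 × Fin 2) ℝ)
    (ψ : Matrix (Fin 2) (Fin 2) ℝ) :
    Matrix (Fin 2 × Fin 2) (Fin 2 × Fin 2) ℝ →ₗ[ℝ] Matrix (Fin 2) (Fin 2) ℝ where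
  toFun ρ := trSA ((e ⊗ₖ (1 : Matrix (Fin 2) (Fin 2) ℝ)) * assocReindex (ψ ⊗ₖ ρ))
  map_add' ρ σ := by
    ext
    simp [trSA, assocReindex, mul_apply, mul_add, Finset.sum_add_distrib]
  map_smul' c ρ := by
    ext
    simp [trSA, assocReindex, mul_apply, Finset.mul_sum, mul_left_comm]

theorem teleportage_kronecker (e : Matrix (Fin 2 × Fin 2) (Fin 2 × Fin 2) ℝ)
    (ψ A B : Matrix (Fin 2) (Fin 2) ℝ) :
    teleportage e ψ (A ⊗ₖ B) = (e * (ψ ⊗ₖ A)).trace • B := by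
  ext b b'
  simp [teleportage, trSA, assocReindex, mul_apply, trace, Fintype.sum_prod_type, one_apply]
  ring

theorem teleportage_Y₄ {e : Matrix (Fin 2 × Fin 2) (Fin 2 × Fin 2) ℝ}
    {ψ : Matrix (Fin 2) (Fin 2) ℝ} (he : e.IsSymm) (hψ : ψ.IsSymm) :
    teleportage e ψ Y₄ = 0 := by
  rw [Y₄, map_neg, teleportage_kronecker,
    trace_mul_eq_zero_of_isSymm_of_transpose_eq_neg he (kronecker_transpose_eq_neg hψ y_transpose),
    zero_smul, neg_zero]

theorem stmt13_general (ρ : Matrix (Fin 2 × Fin 2) (Fin 2 × Fin 2) ℝ)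
    (n : ℕ) (p : Fin n → ℝ) (A B : Fin n → Matrix (Fin 2) (Fin 2) ℝ)
    (hdec : PiTL ρ = ∑ k, p k • (A k ⊗ₖ B k))
    (e : Matrix (Fin 2 × Fin 2) (Fin 2 × Fin 2) ℝ) (he : e.IsSymm) :
    ∀ ψ : Matrix (Fin 2) (Fin 2) ℝ, ψ.IsSymm →
      trSA ((e ⊗ₖ (1 : Matrix (Fin 2) (Fin 2) ℝ)) * assocReindex (ψ ⊗ₖ ρ))
        = ∑ k, (p k * (e * (ψ ⊗ₖ A k)).trace) • B k := by
  intro ψ hψ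
  change teleportage e ψ ρ = _
  have hρ : ρ = PiTL ρ + ((1 / 4 : ℝ) * (ρ * Y₄).trace) • Y₄ := (sub_add_cancel _ _).symm
  rw [hρ, map_add, map_smul, teleportage_Y₄ he hψ, smul_zero, add_zero, hdec, map_sum]
  simp only [map_smul, teleportage_kronecker, smul_smul]

/-- **Proposition 11 of the paper (in real quantum theory):
tomographically-nonlocal entanglement is useless for teleportation.**
If the tomographically-local projection of a two-rebit state is separable,
then the teleportage induced by measuring any joint effect `e` on the input
system and the first rebit is a measure-and-prepare map. -/
theorem stmt13 (ρ : Matrix (Fin 2 × Fin 2) (Fin 2 × Fin 2) ℝ)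
    (hρ : IsTwoRebitState ρ)
    (n : ℕ) (p : Fin n → ℝ) (A B : Fin n → Matrix (Fin 2) (Fin 2) ℝ)
    (hp : ∀ k, 0 ≤ p k) (hps : (∑ k, p k) = 1)
    (hA : ∀ k, (A k).IsSymm ∧ (A k).PosSemidef ∧ (A k).trace = 1)
    (hB : ∀ k, (B k).IsSymm ∧ (B k).PosSemidef ∧ (B k).trace = 1)
    (hdec : PiTL ρ = ∑ k, p k • (A k ⊗ₖ B k))
    (e : Matrix (Fin 2 × Fin 2) (Fin 2 × Fin 2) ℝ) (he : e.IsSymm) :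
    ∀ ψ : Matrix (Fin 2) (Fin 2) ℝ, ψ.IsSymm →
      trSA ((e ⊗ₖ (1 : Matrix (Fin 2) (Fin 2) ℝ)) * assocReindex (ψ ⊗ₖ ρ))
        = ∑ k, (p k * (e * (ψ ⊗ₖ A k)).trace) • B k :=
  stmt13_general ρ n p A B hdec e he
end

section
/- Let y be the real 2×2 matrix with rows (0, −1) and (1, 0) and I₂ the 2×2 identity. For x ∈ {0,1} define the 16×16 real matrix (tensor factor order A, A', B, B') M_x := (1/16)·(I₁₆ − (−1)^x ((y ⊗ₖ I₂) ⊗ₖ (y ⊗ₖ I₂)) − ((I₂ ⊗ₖ y) ⊗ₖ (I₂ ⊗ₖ y)) + (−1)^x ((y ⊗ₖ y) ⊗ₖ (y ⊗ₖ y))), which is the reordering of ω_x^{AB} ⊗ ω₀^{A'B'} with ω_x = (1/4)(I₄ + (−1)^x Y₄) and ω₀ = (1/4)(I₄ + Y₄). For c ∈ {0,1} let e_c := (1/2)(I₄ + (−1)^c Y₄) = (1/2)(I₄ − (−1)^c (y ⊗ₖ y)). Then for all a, b ∈ {0,1}: trace((e_a ⊗ₖ e_b) * M_x) = (1/4)·(1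 + (−1)^{a+b+x}). In particular p(0,0) = p(1,1) = (1/4)(1+(−1)^x) and p(0,1) = p(1,0) = (1/4)(1−(−1)^x), so the outcomes satisfy x = a ⊕ b, enabling LOCC decoding of the hidden bit with an extra pair carrying only tomographically-nonlocal entanglement. -/
open Matrix Kronecker

/-- The global 16×16 state (tensor factor order A, A', B, B'), the reordering of
ω_x^{AB} ⊗ ω₀^{A'B'} with ω_x = (1/4)(I₄ + (−1)^x Y₄) and ω₀ = (1/4)(I₄ + Y₄). -/
noncomputable def Mx (x : Fin 2) :
    Matrix ((Fin 2 × Fin 2) × (Fin 2 × Fin 2)) ((Fin 2 × Fin 2) × (Fin 2 × Fin 2)) ℝ :=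
  (1 / 16 : ℝ) •
    ((1 : Matrix ((Fin 2 × Fin 2) × (Fin 2 × Fin 2)) ((Fin 2 × Fin 2) × (Fin 2 × Fin 2)) ℝ)
      - ((-1 : ℝ) ^ (x : ℕ)) •
          ((y ⊗ₖ (1 : Matrix (Fin 2) (Fin 2) ℝ)) ⊗ₖ (y ⊗ₖ (1 : Matrix (Fin 2) (Fin 2) ℝ)))
      - (((1 : Matrix (Fin 2) (Fin 2) ℝ) ⊗ₖ y) ⊗ₖ ((1 : Matrix (Fin 2) (Fin 2) ℝ) ⊗ₖ y))
      + ((-1 : ℝ) ^ (x : ℕ)) • ((y ⊗ₖ y) ⊗ₖ (y ⊗ₖ y)))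

/-- The decoding effects e_c = (1/2)(I₄ + (−1)^c Y₄) = (1/2)(I₄ − (−1)^c (y ⊗ₖ y)). -/
noncomputable def eMeas (c : Fin 2) : Matrix (Fin 2 × Fin 2) (Fin 2 × Fin 2) ℝ :=
  (1 / 2 : ℝ) • ((1 : Matrix (Fin 2 × Fin 2) (Fin 2 × Fin 2) ℝ)
    + ((-1 : ℝ) ^ (c : ℕ)) • Y₄)

/-! Every term of `Mx x` is a Kronecker product `U ⊗ₖ V` of 4×4 Pauli-type strings in `1` and `y`,
so the trace against `eMeas a ⊗ₖ eMeas b` factors as `tr (eMeas a * U) * tr (eMeas b * V)`.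
Since `tr y = 0` and `y * y = -1`, the effect `eMeas c` is blind to the local terms `y ⊗ₖ 1` and
`1 ⊗ₖ y` and sees only `y ⊗ₖ y`, with sign `(-1) ^ c`; the surviving terms give
`(4 + 4 (-1)^(a+b+x)) / 16`. -/

theorem Matrix.trace_kronecker_mul_kronecker {R l m n p : Type*} [CommSemiring R]
    [Fintype l] [Fintype m] [Fintype n] [Fintype p]
    (A : Matrix l m R) (B : Matrix n p R) (C : Matrix m l R) (D : Matrix p n R) :
    ((A ⊗ₖ B) * (C ⊗ₖ D)).trace = (A * C).trace * (B * D).trace := by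
  rw [← mul_kronecker_mul, trace_kronecker]

theorem trace_y : y.trace = 0 := by
  simp [y, trace, Fin.sum_univ_two]

theorem trace_eMeas_mul_kronecker (c : Fin 2) (P Q : Matrix (Fin 2) (Fin 2) ℝ) :
    (eMeas c * (P ⊗ₖ Q)).trace
      = (1 / 2) * (P.trace * Q.trace - (-1) ^ (c : ℕ) * (y * P).trace * (y * Q).trace) := by
  rw [eMeas, Y₄, ← one_kronecker_one, smul_neg, Matrix.smul_mul, Matrix.add_mul, Matrix.neg_mul,
    Matrix.smul_mul, trace_smul, trace_add, trace_neg, trace_smul,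
    trace_kronecker_mul_kronecker, trace_kronecker_mul_kronecker, Matrix.one_mul, Matrix.one_mul]
  simp only [smul_eq_mul]
  ring

theorem trace_eMeas (c : Fin 2) : (eMeas c).trace = 2 := by
  simpa [trace_y] using trace_eMeas_mul_kronecker c 1 1

theorem trace_eMeas_mul_y_kronecker_one (c : Fin 2) : (eMeas c * (y ⊗ₖ 1)).trace = 0 := by
  simp [trace_eMeas_mul_kronecker, trace_y]

theorem trace_eMeas_mul_one_kronecker_y (c : Fin 2) : (eMeas c * (1 ⊗ₖ y)).trace = 0 := by
  simp [trace_eMeas_mul_kronecker, trace_y]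

theorem trace_eMeas_mul_y_kronecker_y (c : Fin 2) :
    (eMeas c * (y ⊗ₖ y)).trace = -2 * (-1) ^ (c : ℕ) := by
  rw [trace_eMeas_mul_kronecker, y_mul_y, trace_y, trace_neg, trace_one]
  norm_num
  ring

/-- **LOCC decoding of the hidden bit with an extra TNL-entangled pair.**
Measuring e_a on the AA' pair and e_b on the BB' pair of the state M_x yields
outcome probabilities (1/4)(1 + (−1)^{a+b+x}); in particular the outcomes
satisfy x = a ⊕ b. -/
theorem stmt17 (x a b : Fin 2) :
    ((eMeas a ⊗ₖ eMeas b) * Mx x).trace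
      = (1 / 4 : ℝ) * (1 + (-1 : ℝ) ^ ((a : ℕ) + (b : ℕ) + (x : ℕ))) := by
  rw [Mx, ← one_kronecker_one (α := ℝ) (m := Fin 2 × Fin 2)]
  simp only [Matrix.mul_smul, Matrix.mul_add, Matrix.mul_sub, trace_smul, trace_add, trace_sub,
    trace_kronecker_mul_kronecker, mul_one, trace_eMeas, trace_eMeas_mul_y_kronecker_one,
    trace_eMeas_mul_one_kronecker_y, trace_eMeas_mul_y_kronecker_y, smul_eq_mul, pow_add]
  ring
end
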